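/- Let G and F be finite simple graphs, φ a voltage assignment on G with values in Aut(F), and let the vertex set of the graph bundle G×^φF be indexed by pairs (v,u) with v ∈ V(F), u ∈ V(G), so that matrices on V(F)×V(G) are written via Kronecker products with the fiber factor first. Then A(G×^φF) = Σ_{γ ∈ Aut(F)} P(γ) ⊗ A(G_{φ,γ}) + A(F) ⊗ I_{V(G)}, where the sum is over all automorphisms γ of F. -/

import Mathlib

open Matrix BigOperators Kronecker
open scoped Classical

noncomputable section

variable {α β : Type*}

def adjM [Fintype α] (G : SimpleGraph α) : Matrix α α ℂ :=
  Matrix.of fun u v => if G.Adj u v then (1 : ℂ) else 0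

def degM [Fintype α] (G : SimpleGraph α) : Matrix α α ℂ :=
  Matrix.diagonal fun v => ((G.neighborSet v).ncard : ℂ)

def Fpoly [Fintype α] (G : SimpleGraph α) (lam mu : ℂ) : ℂ :=
  (lam • (1 : Matrix α α ℂ) - (adjM G - mu • degM G)).det

def permM (γ : Equiv.Perm β) : Matrix β β ℂ :=
  Matrix.of fun v w => if γ v = w then (1 : ℂ) else 0

def voltM [Fintype α] (G : SimpleGraph α) (φ : α → α → Equiv.Perm β) (γ : Equiv.Perm β) :
    Matrix α α ℂ :=
  Matrix.of fun u₁ u₂ => if G.Adj u₁ u₂ ∧ φ u₁ u₂ = γ then (1 : ℂ) else 0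

def autPerm (F : SimpleGraph β) : Subgroup (Equiv.Perm β) where
  carrier := {γ | ∀ a b, F.Adj (γ a) (γ b) ↔ F.Adj a b}
  one_mem' := by intro a b; simp
  mul_mem' := by intro γ δ hγ hδ a b; simp [Equiv.Perm.mul_apply, hγ _ _, hδ _ _]
  inv_mem' := by intro γ hγ a b; simpa using (hγ (γ⁻¹ a) (γ⁻¹ b)).symm

def bundle (G : SimpleGraph α) (F : SimpleGraph β) (φ : α → α → Equiv.Perm β)
    (hsym : ∀ u₁ u₂, G.Adj u₁ u₂ → φ u₂ u₁ = (φ u₁ u₂)⁻¹) : SimpleGraph (β × α) where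
  Adj p q := (G.Adj p.2 q.2 ∧ q.1 = φ p.2 q.2 p.1) ∨ (p.2 = q.2 ∧ F.Adj p.1 q.1)
  symm := ⟨by
    rintro ⟨v₁, u₁⟩ ⟨v₂, u₂⟩ hadj
    dsimp only at hadj ⊢
    rcases hadj with ⟨h, rfl⟩ | ⟨rfl, h⟩
    · left
      refine ⟨h.symm, ?_⟩
      rw [hsym _ _ h]
      simp
    · right
      exact ⟨rfl, h.symm⟩⟩
  loopless := ⟨by
    rintro ⟨v, u⟩ hadj
    dsimp only at hadj
    rcases hadj with ⟨h, _⟩ | ⟨_, h⟩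
    · exact G.loopless.irrefl u h
    · exact F.loopless.irrefl v h⟩

def dsum [Fintype α] (B : β → Matrix α α ℂ) : Matrix (β × α) (β × α) ℂ :=
  Matrix.of fun p q => if p.1 = q.1 then B p.1 p.2 q.2 else 0

def bigE {ℓ : ℕ} {f m : Fin ℓ → ℕ} (e : β ≃ Σ i : Fin ℓ, Fin (m i) × Fin (f i)) (α : Type*) :
    β × α ≃ Σ i : Fin ℓ, Fin (m i) × (Fin (f i) × α) :=
  (e.prodCongr (Equiv.refl α)).trans
    ((Equiv.sigmaProdDistrib _ _).trans (Equiv.sigmaCongrRight fun _ => Equiv.prodAssoc _ _ _))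



/-! At an entry ((v₁, u₁), (v₂, u₂)) only the summand γ = φ(u₁, u₂) of the voltage sum can be
nonzero, and it records exactly the edges of the bundle between different fibres; `A(F) ⊗ I`
records the edges inside a fibre. The two kinds of edges are disjoint because `G` has no loops. -/

theorem sum_permM_kronecker_voltM_apply [Fintype α] {G : SimpleGraph α}
    {φ : α → α → Equiv.Perm β} {H : Subgroup (Equiv.Perm β)} [Fintype H]
    (hφ : ∀ u₁ u₂, G.Adj u₁ u₂ → φ u₁ u₂ ∈ H) (v₁ v₂ : β) (u₁ u₂ : α) :
    (∑ γ : H, permM (γ : Equiv.Perm β) ⊗ₖ voltM G φ γ) (v₁, u₁) (v₂, u₂)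
      = if G.Adj u₁ u₂ ∧ φ u₁ u₂ v₁ = v₂ then 1 else 0 := by
  simp only [Matrix.sum_apply, kroneckerMap_apply, permM, voltM, of_apply]
  by_cases hadj : G.Adj u₁ u₂
  · rw [Fintype.sum_eq_single ⟨φ u₁ u₂, hφ _ _ hadj⟩ fun γ hγ => ?_]
    · simp [hadj]
    · have hφγ : φ u₁ u₂ ≠ γ := fun h => hγ (Subtype.ext h.symm)
      simp [hφγ]
  · simp [hadj]

theorem adjacency_of_graph_bundle
    {α β : Type*} [Fintype α] [Fintype β]
    (G : SimpleGraph α) (F : SimpleGraph β) (φ : α → α → Equiv.Perm β)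
    (hsym : ∀ u₁ u₂, G.Adj u₁ u₂ → φ u₂ u₁ = (φ u₁ u₂)⁻¹)
    (hAut : ∀ u₁ u₂, G.Adj u₁ u₂ → φ u₁ u₂ ∈ autPerm F) :
    adjM (bundle G F φ hsym)
      = (∑ γ : autPerm F, permM (γ : Equiv.Perm β) ⊗ₖ voltM G φ (γ : Equiv.Perm β))
        + adjM F ⊗ₖ (1 : Matrix α α ℂ) := by
  ext ⟨v₁, u₁⟩ ⟨v₂, u₂⟩
  rw [Matrix.add_apply, sum_permM_kronecker_voltM_apply hAut, kronecker_one, blockDiagonal_apply']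
  by_cases hadj : G.Adj u₁ u₂
  · simp [adjM, bundle, hadj, G.ne_of_adj hadj, eq_comm]
  · by_cases hu : u₁ = u₂ <;> simp [adjM, bundle, hadj, hu]

end
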